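/- arXiv:1109.2408 — 6 statements merged into one kernel-verified Lean document; each statement's English description precedes it below -/
import Mathlib

section
/- Every semi-elementary imset u_{⟨A,B|C⟩} with A, B nonempty can be written as a finite sum of elementary imsets u_{⟨{a},{b}|Γ⟩} with non-negative integer coefficients. -/
/-- `δ_A : P(N) → ℤ`. -/
def deltaImset {α : Type*} [DecidableEq α] (A : Finset α) : Finset α → ℤ :=
  fun S => if S = A then 1 else 0

/-- Semi-elementary imset `u_{⟨A,B|C⟩}`. -/
def semiElemImset {α : Type*} [DecidableEq α] (A B C : Finset α) : Finset α → ℤ :=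
  deltaImset (A ∪ B ∪ C) + deltaImset C - deltaImset (A ∪ C) - deltaImset (B ∪ C)

/-- Index of an elementary imset: `⟨a,b|Γ⟩` with `a ≠ b`, `a ∉ Γ`, `b ∉ Γ`. -/
abbrev ElemIdx (α : Type*) [DecidableEq α] :=
  {t : α × α × Finset α // t.1 ≠ t.2.1 ∧ t.1 ∉ t.2.2 ∧ t.2.1 ∉ t.2.2}

section Aux

variable {α : Type*} [DecidableEq α] [Fintype α]

def RepNN (f : Finset α → ℤ) : Prop :=
  ∃ k : ElemIdx α → ℕ,
    f = ∑ t : ElemIdx α, (k t : ℤ) • semiElemImset {t.val.1} {t.val.2.1} t.val.2.2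

lemma repNN_zero : RepNN (0 : Finset α → ℤ) := by
  refine ⟨0, ?_⟩
  simp

lemma repNN_add {f g : Finset α → ℤ} (hf : RepNN f) (hg : RepNN g) : RepNN (f + g) := by
  obtain ⟨k1, hk1⟩ := hf
  obtain ⟨k2, hk2⟩ := hg
  refine ⟨k1 + k2, ?_⟩
  rw [hk1, hk2, ← Finset.sum_add_distrib]
  congr 1
  funext t
  simp only [Pi.add_apply]
  push_cast
  rw [add_smul]

lemma repNN_elem (a b : α) (Γ : Finset α) (hab : a ≠ b) (haΓ : a ∉ Γ) (hbΓ : b ∉ Γ) :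
    RepNN (semiElemImset {a} {b} Γ) := by
  set t0 : ElemIdx α := ⟨(a, b, Γ), hab, haΓ, hbΓ⟩
  refine ⟨fun t => if t = t0 then 1 else 0, ?_⟩
  rw [show (semiElemImset {a} {b} Γ) =
      semiElemImset {t0.val.1} {t0.val.2.1} t0.val.2.2 from rfl]
  rw [← Fintype.sum_ite_eq' t0 (fun t => semiElemImset {t.val.1} {t.val.2.1} t.val.2.2)]
  congr 1
  funext t
  by_cases h : t = t0 <;> simp [h]

lemma semiElem_empty_right (A C : Finset α) : semiElemImset A ∅ C = 0 := by
  simp [semiElemImset]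

lemma semiElem_comm (A B C : Finset α) : semiElemImset A B C = semiElemImset B A C := by
  unfold semiElemImset
  rw [Finset.union_comm A B]
  abel

lemma semiElem_split (A B D C : Finset α) :
    semiElemImset A (B ∪ D) C = semiElemImset A B C + semiElemImset A D (B ∪ C) := by
  unfold semiElemImset
  have h1 : A ∪ (B ∪ D) ∪ C = A ∪ D ∪ (B ∪ C) := by
    ext x; simp [Finset.mem_union]; tauto
  have h2 : B ∪ D ∪ C = D ∪ (B ∪ C) := by
    ext x; simp [Finset.mem_union]; tauto
  have h3 : A ∪ B ∪ C = A ∪ (B ∪ C) := by rw [Finset.union_assoc]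
  rw [h1, h2, h3]
  abel

lemma repNN_singleton (B : Finset α) : ∀ (a : α) (C : Finset α), a ∉ B → a ∉ C →
    Disjoint B C → RepNN (semiElemImset {a} B C) := by
  induction B using Finset.induction_on with
  | empty => intro a C _ _ _; rw [semiElem_empty_right]; exact repNN_zero
  | @insert b B hbB ih =>
    intro a C haB haC hBC
    rw [Finset.insert_eq, semiElem_split]
    have hab : a ≠ b := by simp at haB; tauto
    have haB' : a ∉ B := by simp at haB; tauto
    have hbC : b ∉ C := Finset.disjoint_left.mp hBC (by simp)
    refine repNN_add (repNN_elem a b C hab haC hbC) (ih a ({b} ∪ C) haB' ?_ ?_)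
    · simp [hab, haC]
    · rw [Finset.disjoint_union_right]
      constructor
      · simpa using hbB
      · exact Finset.disjoint_of_subset_left (Finset.subset_insert b B) hBC

lemma repNN_general (A : Finset α) : ∀ (B C : Finset α), Disjoint A B → Disjoint A C →
    Disjoint B C → RepNN (semiElemImset A B C) := by
  induction A using Finset.induction_on with
  | empty =>
    intro B C _ _ _
    rw [semiElem_comm, semiElem_empty_right]
    exact repNN_zero
  | @insert a A haA ih =>
    intro B C hAB hAC hBC
    rw [semiElem_comm, Finset.insert_eq, semiElem_split]
    have haB : a ∉ B := Finset.disjoint_left.mp hAB (by simp)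
    have haC : a ∉ C := Finset.disjoint_left.mp hAC (by simp)
    have h1 : RepNN (semiElemImset B {a} C) := by
      rw [semiElem_comm]; exact repNN_singleton B a C haB haC hBC
    have h2 : RepNN (semiElemImset B A ({a} ∪ C)) := by
      rw [semiElem_comm]
      refine ih B ({a} ∪ C) (Finset.disjoint_of_subset_left (Finset.subset_insert a A) hAB) ?_ ?_
      · rw [Finset.disjoint_union_right]
        exact ⟨by simpa using haA,
          Finset.disjoint_of_subset_left (Finset.subset_insert a A) hAC⟩
      · rw [Finset.disjoint_union_right]
        exact ⟨by simpa using haB, hBC⟩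
    exact repNN_add h1 h2

end Aux

theorem semi_elementary_nonneg_combination {α : Type*} [DecidableEq α] [Fintype α]
    (A B C : Finset α)
    (hAB : Disjoint A B) (hAC : Disjoint A C) (hBC : Disjoint B C)
    (hA : A.Nonempty) (hB : B.Nonempty) :
    ∃ k : ElemIdx α → ℕ,
      semiElemImset A B C =
        ∑ t : ElemIdx α, (k t : ℤ) • semiElemImset {t.val.1} {t.val.2.1} t.val.2.2 := by
  exact repNN_general A B C hAB hAC hBC
end

section
/- A function f : P(N) → ℝ is supermodular if and only if ⟨f, u_{⟨{a},{b}|C⟩}⟩ ≥ 0 for every elementary imset, where ⟨f, u_{⟨A,B|C⟩}⟩ = f(A∪B∪C) + f(C) − f(A∪C) − f(B∪C). -/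
private lemma diff_mono_aux {α : Type*} [DecidableEq α] (f : Finset α → ℝ)
    (h : ∀ (a b : α) (C : Finset α), a ≠ b → a ∉ C → b ∉ C →
      0 ≤ f ({a, b} ∪ C) + f C - f ({a} ∪ C) - f ({b} ∪ C)) :
    ∀ (n : ℕ) (a : α) (S T : Finset α), S ⊆ T → a ∉ T → (T \ S).card = n →
      f (insert a S) - f S ≤ f (insert a T) - f T := by
  intro n
  induction n with
  | zero =>
    intro a S T hST haT hcard
    have : T \ S = ∅ := Finset.card_eq_zero.mp hcard
    have hTS : T ⊆ S := Finset.sdiff_eq_empty_iff_subset.mp this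
    have : S = T := Finset.Subset.antisymm hST hTS
    subst this
    exact le_refl _
  | succ n ih =>
    intro a S T hST haT hcard
    have hne : (T \ S).Nonempty := by
      rw [← Finset.card_pos, hcard]; omega
    obtain ⟨b, hb⟩ := hne
    have hbT : b ∈ T := (Finset.mem_sdiff.mp hb).1
    have hbS : b ∉ S := (Finset.mem_sdiff.mp hb).2
    have haS : a ∉ S := fun hx => haT (hST hx)
    have hab : a ≠ b := fun hx => haT (hx ▸ hbT)
    have step := h a b S hab haS hbS
    have e1 : ({a, b} : Finset α) ∪ S = insert a (insert b S) := by
      ext x; simp [Finset.mem_union, Finset.mem_insert]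
    have e2 : ({a} : Finset α) ∪ S = insert a S := by ext x; simp
    have e3 : ({b} : Finset α) ∪ S = insert b S := by ext x; simp
    rw [e1, e2, e3] at step
    have hsub : insert b S ⊆ T := Finset.insert_subset hbT hST
    have hc : (T \ insert b S).card = n := by
      rw [Finset.sdiff_insert, Finset.card_erase_of_mem hb, hcard]; omega
    have := ih a (insert b S) T hsub haT hc
    linarith

theorem supermodular_iff_elementary_inner_products_nonneg {α : Type*} [DecidableEq α]
    (f : Finset α → ℝ) :
    (∀ E F : Finset α, f E + f F ≤ f (E ∪ F) + f (E ∩ F)) ↔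
    (∀ (a b : α) (C : Finset α), a ≠ b → a ∉ C → b ∉ C →
      0 ≤ f ({a, b} ∪ C) + f C - f ({a} ∪ C) - f ({b} ∪ C)) := by
  constructor
  · intro h a b C hab haC hbC
    have key := h ({a} ∪ C) ({b} ∪ C)
    have e1 : ({a} : Finset α) ∪ C ∪ ({b} ∪ C) = {a, b} ∪ C := by
      ext x; simp [Finset.mem_union, Finset.mem_insert]; tauto
    have e2 : (({a} : Finset α) ∪ C) ∩ ({b} ∪ C) = C := by
      ext x
      simp only [Finset.mem_inter, Finset.mem_union, Finset.mem_singleton]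
      constructor
      · rintro ⟨ha | hC, hb | hC'⟩
        · exact absurd (ha.symm.trans hb) hab
        · exact hC'
        · exact hC
        · exact hC
      · intro hx; exact ⟨Or.inr hx, Or.inr hx⟩
    rw [e1, e2] at key
    linarith
  · intro h
    have main : ∀ (n : ℕ) (E F : Finset α), (E \ F).card = n →
        f E + f F ≤ f (E ∪ F) + f (E ∩ F) := by
      intro n
      induction n with
      | zero =>
        intro E F hcard
        have hEF : E ⊆ F := Finset.sdiff_eq_empty_iff_subset.mp
          (Finset.card_eq_zero.mp hcard)
        rw [Finset.union_eq_right.mpr hEF, Finset.inter_eq_left.mpr hEF]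
        linarith
      | succ n ih =>
        intro E F hcard
        have hne : (E \ F).Nonempty := by
          rw [← Finset.card_pos, hcard]; omega
        obtain ⟨a, ha⟩ := hne
        have haE : a ∈ E := (Finset.mem_sdiff.mp ha).1
        have haF : a ∉ F := (Finset.mem_sdiff.mp ha).2
        set E' := E.erase a with hE'
        have haE' : a ∉ E' := Finset.notMem_erase a E
        have hEeq : E = insert a E' := (Finset.insert_erase haE).symm
        have haU : a ∉ E' ∪ F := by
          simp [Finset.mem_union, haE', haF]
        have hsub : E' ⊆ E' ∪ F := Finset.subset_union_left
        have hd := diff_mono_aux f h ((E' ∪ F) \ E').card a E' (E' ∪ F) hsub haU rfl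
        have hUeq : insert a (E' ∪ F) = E ∪ F := by
          rw [hEeq]; ext x; simp [Finset.mem_union, Finset.mem_insert]
        have hIeq : E' ∩ F = E ∩ F := by
          ext x
          simp only [hE', Finset.mem_inter, Finset.mem_erase]
          constructor
          · rintro ⟨⟨_, hx⟩, hxF⟩; exact ⟨hx, hxF⟩
          · rintro ⟨hx, hxF⟩; exact ⟨⟨fun hxa => haF (hxa ▸ hxF), hx⟩, hxF⟩
        have hc : (E' \ F).card = n := by
          have : E' \ F = (E \ F).erase a := by
            rw [hE', Finset.erase_sdiff_comm]
          rw [this, Finset.card_erase_of_mem ha, hcard]; omega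
        have hIH := ih E' F hc
        rw [hUeq, ← hEeq] at hd
        rw [hIeq] at hIH
        linarith
    intro E F
    exact main (E \ F).card E F rfl
end

section
/- For every k with 1 ≤ k < |N|, the standardized supermodular function f(S) = max(|S| − k, 0) is an extreme ray of the cone of standardized supermodular functions: if f = f₁ + f₂ with f₁, f₂ supermodular and vanishing on sets of cardinality ≤ 1, then f₁ and f₂ are non-negative scalar multiples of f. -/
/-- Supermodularity of a set function. -/
def Supermodular {α : Type*} [DecidableEq α] (f : Finset α → ℝ) : Prop :=
  ∀ E F : Finset α, f E + f F ≤ f (E ∪ F) + f (E ∩ F)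

/-- Standardized: vanishes on sets of cardinality at most 1. -/
def Standardized {α : Type*} (f : Finset α → ℝ) : Prop :=
  ∀ S : Finset α, S.card ≤ 1 → f S = 0

lemma skeletal_aux {α : Type*} [DecidableEq α] [Fintype α]
    (k : ℕ) (hk1 : 1 ≤ k) (hk2 : k < Fintype.card α)
    (f₁ f₂ : Finset α → ℝ)
    (h₁ : Supermodular f₁) (h₂ : Supermodular f₂)
    (s₁ : Standardized f₁) (s₂ : Standardized f₂)
    (hsum : ∀ S : Finset α, max ((S.card : ℝ) - k) 0 = f₁ S + f₂ S) :
    ∃ c₁ : ℝ, 0 ≤ c₁ ∧ ∀ S : Finset α, f₁ S = c₁ * max ((S.card : ℝ) - k) 0 := by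
  set g : Finset α → ℝ := fun S => max ((S.card : ℝ) - k) 0 with hg
  have gzero : ∀ S : Finset α, S.card ≤ k → g S = 0 := by
    intro S hS
    apply max_eq_right
    have : (S.card : ℝ) ≤ k := by exact_mod_cast hS
    linarith
  have gpos : ∀ S : Finset α, k ≤ S.card → g S = (S.card : ℝ) - k := by
    intro S hS
    apply max_eq_left
    have : (k : ℝ) ≤ S.card := by exact_mod_cast hS
    linarith
  have eqlem : ∀ E F : Finset α, g E + g F = g (E ∪ F) + g (E ∩ F) →
      f₁ E + f₁ F = f₁ (E ∪ F) + f₁ (E ∩ F) := by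
    intro E F hEF
    have a1 := h₁ E F
    have a2 := h₂ E F
    have b1 := hsum E; have b2 := hsum F
    have b3 := hsum (E ∪ F); have b4 := hsum (E ∩ F)
    linarith
  -- set facts
  have union_erase : ∀ (S : Finset α) (a b : α), a ∈ S → b ∈ S → a ≠ b →
      S.erase a ∪ S.erase b = S := by
    intro S a b ha hb hab
    ext y
    simp only [Finset.mem_union, Finset.mem_erase]
    constructor
    · rintro (⟨_, h⟩ | ⟨_, h⟩) <;> exact h
    · intro hy
      by_cases h : y = a
      · right; exact ⟨h ▸ hab, hy⟩
      · left; exact ⟨h, hy⟩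
  have inter_erase : ∀ (S : Finset α) (a b : α),
      S.erase a ∩ S.erase b = (S.erase a).erase b := by
    intro S a b
    ext y
    simp only [Finset.mem_inter, Finset.mem_erase]
    tauto
  -- f₁ vanishes at levels ≤ k
  have f1zero : ∀ S : Finset α, S.card ≤ k → f₁ S = 0 := by
    suffices H : ∀ n : ℕ, ∀ S : Finset α, S.card = n → n ≤ k → f₁ S = 0 by
      intro S h; exact H S.card S rfl h
    intro n
    induction n using Nat.strong_induction_on with
    | _ n ih =>
      intro S hS hnk
      by_cases h1 : n ≤ 1
      · exact s₁ S (by omega)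
      push_neg at h1
      obtain ⟨a, b, ha, hb, hab⟩ := Finset.one_lt_card_iff.mp (show 1 < S.card by omega)
      have hU := union_erase S a b ha hb hab
      have hI := inter_erase S a b
      have cE : (S.erase a).card = n - 1 := by
        rw [Finset.card_erase_of_mem ha, hS]
      have cF : (S.erase b).card = n - 1 := by
        rw [Finset.card_erase_of_mem hb, hS]
      have hbE : b ∈ S.erase a := Finset.mem_erase.mpr ⟨Ne.symm hab, hb⟩
      have cI : ((S.erase a).erase b).card = n - 2 := by
        rw [Finset.card_erase_of_mem hbE, cE]; omega
      have key := eqlem (S.erase a) (S.erase b) (by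
        rw [hU, hI, gzero _ (by omega), gzero _ (by omega),
          gzero _ (by omega), gzero _ (by omega)])
      rw [hU, hI] at key
      have e1 : f₁ (S.erase a) = 0 := ih (n-1) (by omega) _ cE (by omega)
      have e2 : f₁ (S.erase b) = 0 := ih (n-1) (by omega) _ cF (by omega)
      have e3 : f₁ ((S.erase a).erase b) = 0 := ih (n-2) (by omega) _ cI (by omega)
      linarith
  -- one-element exchange at level k+1
  have step : ∀ (A : Finset α) (a b : α), A.card = k → a ∉ A → b ∉ A → a ≠ b →
      f₁ (insert a A) = f₁ (insert b A) := by
    intro A a b hA ha hb hab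
    obtain ⟨x, hx⟩ := Finset.card_pos.mp (show 0 < A.card by omega)
    set B := A.erase x with hB
    have hBcard : B.card = k - 1 := by rw [hB, Finset.card_erase_of_mem hx, hA]
    have hxA : insert x B = A := Finset.insert_erase hx
    have hxB : x ∉ B := Finset.notMem_erase x A
    have haB : a ∉ B := fun h => ha (Finset.mem_of_mem_erase h)
    have hbB : b ∉ B := fun h => hb (Finset.mem_of_mem_erase h)
    have hax : a ≠ x := fun h => ha (h ▸ hx)
    have hbx : b ≠ x := fun h => hb (h ▸ hx)
    -- cardinalities
    have cA1 : (insert a A).card = k + 1 := by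
      rw [Finset.card_insert_of_notMem ha, hA]
    have cB1 : (insert b A).card = k + 1 := by
      rw [Finset.card_insert_of_notMem hb, hA]
    have caB : (insert a B).card = k := by
      rw [Finset.card_insert_of_notMem haB, hBcard]; omega
    have cbB : (insert b B).card = k := by
      rw [Finset.card_insert_of_notMem hbB, hBcard]; omega
    have cabB : (insert a (insert b B)).card = k + 1 := by
      rw [Finset.card_insert_of_notMem (by
        simp only [Finset.mem_insert]; push_neg; exact ⟨hab, haB⟩), cbB]
    have cbaA : (insert b (insert a A)).card = k + 2 := by
      rw [Finset.card_insert_of_notMem (by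
        simp only [Finset.mem_insert]; push_neg; exact ⟨Ne.symm hab, hb⟩), cA1]
    -- unions and intersections
    have hU1 : insert a A ∪ insert a (insert b B) = insert b (insert a A) := by
      ext y
      simp only [Finset.mem_union, Finset.mem_insert, hB, Finset.mem_erase]
      tauto
    have hI1 : insert a A ∩ insert a (insert b B) = insert a B := by
      ext y
      simp only [Finset.mem_inter, Finset.mem_insert, hB, Finset.mem_erase]
      constructor
      · rintro ⟨h1 | h1, h2 | h2 | h2⟩
        · exact Or.inl h1
        · exact Or.inl h1
        · exact Or.inl h1
        · exact Or.inl h2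
        · exact absurd (h2 ▸ h1) hb
        · exact Or.inr h2
      · rintro (h | h)
        · exact ⟨Or.inl h, Or.inl h⟩
        · exact ⟨Or.inr h.2, Or.inr (Or.inr h)⟩
    have hU2 : insert b A ∪ insert a (insert b B) = insert b (insert a A) := by
      ext y
      simp only [Finset.mem_union, Finset.mem_insert, hB, Finset.mem_erase]
      tauto
    have hI2 : insert b A ∩ insert a (insert b B) = insert b B := by
      ext y
      simp only [Finset.mem_inter, Finset.mem_insert, hB, Finset.mem_erase]
      constructor
      · rintro ⟨h1 | h1, h2 | h2 | h2⟩
        · exact Or.inl h1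
        · exact Or.inl h1
        · exact Or.inl h1
        · exact absurd (h2 ▸ h1) ha
        · exact Or.inl h2
        · exact Or.inr h2
      · rintro (h | h)
        · exact ⟨Or.inl h, Or.inr (Or.inl h)⟩
        · exact ⟨Or.inr h.2, Or.inr (Or.inr h)⟩
    have geq : ∀ (E F : Finset α), E.card = k + 1 → F.card = k + 1 →
        (E ∪ F).card = k + 2 → (E ∩ F).card = k →
        g E + g F = g (E ∪ F) + g (E ∩ F) := by
      intro E F hE hF hUc hIc
      rw [gpos E (by omega), gpos F (by omega), gpos _ (by omega), gzero _ (by omega),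
        hE, hF, hUc]
      push_cast
      ring
    have key1 := eqlem (insert a A) (insert a (insert b B))
      (geq _ _ cA1 cabB (by rw [hU1]; exact cbaA) (by rw [hI1]; exact caB))
    rw [hU1, hI1] at key1
    have key2 := eqlem (insert b A) (insert a (insert b B))
      (geq _ _ cB1 cabB (by rw [hU2]; exact cbaA) (by rw [hI2]; exact cbB))
    rw [hU2, hI2] at key2
    have z1 : f₁ (insert a B) = 0 := f1zero _ (by omega)
    have z2 : f₁ (insert b B) = 0 := f1zero _ (by omega)
    linarith
  -- constancy at level k+1
  have const : ∀ S T : Finset α, S.card = k + 1 → T.card = k + 1 → f₁ S = f₁ T := by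
    suffices H : ∀ n : ℕ, ∀ S T : Finset α, S.card = k + 1 → T.card = k + 1 →
        (S \ T).card = n → f₁ S = f₁ T by
      intro S T hS hT; exact H (S \ T).card S T hS hT rfl
    intro n
    induction n using Nat.strong_induction_on with
    | _ n ih =>
      intro S T hS hT hn
      rcases Nat.eq_zero_or_pos n with h0 | hpos
      · have hsub : S ⊆ T := by
          rw [← Finset.sdiff_eq_empty_iff_subset]
          exact Finset.card_eq_zero.mp (by omega)
        rw [Finset.eq_of_subset_of_card_le hsub (by omega)]
      · obtain ⟨a, haST⟩ := Finset.card_pos.mp (show 0 < (S \ T).card by omega)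
        have haS : a ∈ S := (Finset.mem_sdiff.mp haST).1
        have haT : a ∉ T := (Finset.mem_sdiff.mp haST).2
        have hTS : (T \ S).Nonempty := by
          by_contra h
          rw [Finset.not_nonempty_iff_eq_empty, Finset.sdiff_eq_empty_iff_subset] at h
          have := Finset.eq_of_subset_of_card_le h (by omega)
          rw [this] at haT
          exact haT haS
        obtain ⟨b, hbTS⟩ := hTS
        have hbT : b ∈ T := (Finset.mem_sdiff.mp hbTS).1
        have hbS : b ∉ S := (Finset.mem_sdiff.mp hbTS).2
        have hab : a ≠ b := fun h => hbS (h ▸ haS)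
        have hbE : b ∉ S.erase a := fun h => hbS (Finset.mem_of_mem_erase h)
        have hE : (S.erase a).card = k := by
          rw [Finset.card_erase_of_mem haS, hS]; omega
        have h1 : f₁ S = f₁ (insert b (S.erase a)) := by
          have := step (S.erase a) a b hE (Finset.notMem_erase a S) hbE hab
          rwa [Finset.insert_erase haS] at this
        have hS' : (insert b (S.erase a)).card = k + 1 := by
          rw [Finset.card_insert_of_notMem hbE, hE]
        have hsd : ((insert b (S.erase a)) \ T).card = n - 1 := by
          rw [Finset.insert_sdiff_of_mem _ hbT]
          have : S.erase a \ T = (S \ T).erase a := by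
            ext y
            simp only [Finset.mem_sdiff, Finset.mem_erase]
            tauto
          rw [this, Finset.card_erase_of_mem haST, hn]
        rw [h1]
        exact ih (n - 1) (by omega) _ T hS' hT hsd
  -- the reference set at level k+1
  obtain ⟨S₀, -, hS₀⟩ := Finset.exists_subset_card_eq
    (show k + 1 ≤ (Finset.univ : Finset α).card by rw [Finset.card_univ]; omega)
  refine ⟨f₁ S₀, ?_, ?_⟩
  · -- nonnegativity
    obtain ⟨a, b, ha, hb, hab⟩ := Finset.one_lt_card_iff.mp (show 1 < S₀.card by omega)
    have := h₁ (S₀.erase a) (S₀.erase b)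
    rw [union_erase S₀ a b ha hb hab, inter_erase S₀ a b] at this
    have e1 : f₁ (S₀.erase a) = 0 := f1zero _ (by rw [Finset.card_erase_of_mem ha, hS₀]; omega)
    have e2 : f₁ (S₀.erase b) = 0 := f1zero _ (by rw [Finset.card_erase_of_mem hb, hS₀]; omega)
    have e3 : f₁ ((S₀.erase a).erase b) = 0 := f1zero _ (by
      rw [Finset.card_erase_of_mem (Finset.mem_erase.mpr ⟨Ne.symm hab, hb⟩),
        Finset.card_erase_of_mem ha, hS₀]; omega)
    linarith
  · -- main formula
    suffices H : ∀ n : ℕ, ∀ S : Finset α, S.card = n → f₁ S = f₁ S₀ * g S by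
      intro S; exact H S.card S rfl
    intro n
    induction n using Nat.strong_induction_on with
    | _ n ih =>
      intro S hS
      by_cases hle : n ≤ k
      · rw [f1zero S (by omega), gzero S (by omega), mul_zero]
      by_cases heq : n = k + 1
      · rw [const S S₀ (by omega) hS₀, gpos S (by omega), hS, heq]
        push_cast
        ring
      -- n ≥ k + 2
      obtain ⟨a, b, ha, hb, hab⟩ := Finset.one_lt_card_iff.mp (show 1 < S.card by omega)
      have hU := union_erase S a b ha hb hab
      have hI := inter_erase S a b
      have cE : (S.erase a).card = n - 1 := by rw [Finset.card_erase_of_mem ha, hS]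
      have cF : (S.erase b).card = n - 1 := by rw [Finset.card_erase_of_mem hb, hS]
      have cI : ((S.erase a).erase b).card = n - 2 := by
        rw [Finset.card_erase_of_mem (Finset.mem_erase.mpr ⟨Ne.symm hab, hb⟩), cE]; omega
      have castE : ((n - 1 : ℕ) : ℝ) = (n : ℝ) - 1 := by
        have : 1 ≤ n := by omega
        push_cast [this]; ring
      have castI : ((n - 2 : ℕ) : ℝ) = (n : ℝ) - 2 := by
        have : 2 ≤ n := by omega
        push_cast [this]; ring
      have geq : g (S.erase a) + g (S.erase b) = g S + g ((S.erase a).erase b) := by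
        rw [gpos _ (by omega), gpos _ (by omega), gpos _ (by omega), gpos _ (by omega),
          cE, cF, cI, hS, castE, castI]
        ring
      have key := eqlem (S.erase a) (S.erase b) (by rw [hU, hI]; exact geq)
      rw [hU, hI] at key
      have e1 := ih (n - 1) (by omega) _ cE
      have e2 := ih (n - 1) (by omega) _ cF
      have e3 := ih (n - 2) (by omega) _ cI
      have hr : f₁ S₀ * (g (S.erase a) + g (S.erase b) - g ((S.erase a).erase b))
          = f₁ S₀ * g (S.erase a) + f₁ S₀ * g (S.erase b)
            - f₁ S₀ * g ((S.erase a).erase b) := by ring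
      have hgS : g S = g (S.erase a) + g (S.erase b) - g ((S.erase a).erase b) := by
        linarith
      rw [hgS, hr]
      linarith

theorem max_card_sub_k_skeletal {α : Type*} [DecidableEq α] [Fintype α]
    (k : ℕ) (hk1 : 1 ≤ k) (hk2 : k < Fintype.card α)
    (f₁ f₂ : Finset α → ℝ)
    (h₁ : Supermodular f₁) (h₂ : Supermodular f₂)
    (s₁ : Standardized f₁) (s₂ : Standardized f₂)
    (hsum : (fun S : Finset α => max ((S.card : ℝ) - k) 0) = f₁ + f₂) :
    ∃ c₁ c₂ : ℝ, 0 ≤ c₁ ∧ 0 ≤ c₂ ∧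
      f₁ = c₁ • (fun S : Finset α => max ((S.card : ℝ) - k) 0) ∧
      f₂ = c₂ • (fun S : Finset α => max ((S.card : ℝ) - k) 0) := by
  have hsum' : ∀ S : Finset α, max ((S.card : ℝ) - k) 0 = f₁ S + f₂ S := by
    intro S
    have := congrFun hsum S
    simpa using this
  have hsum'' : ∀ S : Finset α, max ((S.card : ℝ) - k) 0 = f₂ S + f₁ S := by
    intro S; rw [hsum' S]; ring
  obtain ⟨c₁, hc₁, H₁⟩ := skeletal_aux k hk1 hk2 f₁ f₂ h₁ h₂ s₁ s₂ hsum'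
  obtain ⟨c₂, hc₂, H₂⟩ := skeletal_aux k hk1 hk2 f₂ f₁ h₂ h₁ s₂ s₁ hsum''
  refine ⟨c₁, c₂, hc₁, hc₂, funext fun S => ?_, funext fun S => ?_⟩
  · simpa using H₁ S
  · simpa using H₂ S
end

section
/- For A ⊆ N with |A| ≥ 2, the indicator function f_A(S) = 1 if A ⊆ S and 0 otherwise is supermodular, standardized, and skeletal (an extreme ray of the cone of standardized supermodular functions). -/
/-- Skeletal: extreme ray of the cone of standardized supermodular functions. -/
def Skeletal {α : Type*} [DecidableEq α] (f : Finset α → ℝ) : Prop :=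
  ∀ f₁ f₂ : Finset α → ℝ, Supermodular f₁ → Supermodular f₂ →
    Standardized f₁ → Standardized f₂ → f = f₁ + f₂ →
    ∃ c₁ c₂ : ℝ, f₁ = c₁ • f ∧ f₂ = c₂ • f

lemma supermod_insert_le {α : Type*} [DecidableEq α] {g : Finset α → ℝ}
    (hg : Supermodular g) (hs : Standardized g) (S : Finset α) (x : α) :
    g S ≤ g (insert x S) := by
  have h := hg S {x}
  have h1 : g {x} = 0 := hs {x} (by simp)
  have h2 : g (S ∩ {x}) = 0 := by
    apply hs
    calc (S ∩ {x}).card ≤ ({x} : Finset α).card :=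
      Finset.card_le_card Finset.inter_subset_right
    _ = 1 := by simp
  have h3 : S ∪ {x} = insert x S := by
    rw [Finset.insert_eq, Finset.union_comm]
  rw [h1, h2, h3] at h
  linarith

lemma supermod_mono {α : Type*} [DecidableEq α] {g : Finset α → ℝ}
    (hg : Supermodular g) (hs : Standardized g) {S T : Finset α} (hST : S ⊆ T) :
    g S ≤ g T := by
  have key : ∀ n : ℕ, ∀ S T : Finset α, S ⊆ T → (T \ S).card = n → g S ≤ g T := by
    intro n
    induction n with
    | zero =>
      intro S T hST hc
      have : T = S := by
        have := Finset.card_eq_zero.mp hc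
        have hTS : T ⊆ S := by
          intro x hx
          by_contra hxS
          exact absurd (Finset.mem_sdiff.mpr ⟨hx, hxS⟩) (by simp [this])
        exact Finset.Subset.antisymm hTS hST
      rw [this]
    | succ n ih =>
      intro S T hST hc
      have hne : (T \ S).Nonempty := by
        rw [← Finset.card_pos, hc]; omega
      obtain ⟨x, hx⟩ := hne
      rw [Finset.mem_sdiff] at hx
      have h1 : insert x S ⊆ T := Finset.insert_subset hx.1 hST
      have h2 : (T \ insert x S).card = n := by
        have : T \ insert x S = (T \ S).erase x := by
          ext y; simp [Finset.mem_sdiff, Finset.mem_erase]; tauto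
        rw [this, Finset.card_erase_of_mem (Finset.mem_sdiff.mpr hx), hc]; omega
      calc g S ≤ g (insert x S) := supermod_insert_le hg hs S x
        _ ≤ g T := ih (insert x S) T h1 h2
  exact key (T \ S).card S T hST rfl

lemma supermod_nonneg {α : Type*} [DecidableEq α] {g : Finset α → ℝ}
    (hg : Supermodular g) (hs : Standardized g) (S : Finset α) : 0 ≤ g S := by
  have := supermod_mono hg hs (Finset.empty_subset S)
  rwa [hs ∅ (by simp)] at this

theorem indicator_superset_skeletal {α : Type*} [DecidableEq α] [Fintype α]
    (A : Finset α) (hA : 2 ≤ A.card) :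
    Supermodular (fun S : Finset α => if A ⊆ S then (1 : ℝ) else 0) ∧
    Standardized (fun S : Finset α => if A ⊆ S then (1 : ℝ) else 0) ∧
    Skeletal (fun S : Finset α => if A ⊆ S then (1 : ℝ) else 0) := by
  refine ⟨?_, ?_, ?_⟩
  · intro E F
    by_cases hE : A ⊆ E <;> by_cases hF : A ⊆ F <;>
      simp only [hE, hF, if_true, if_false]
    · have hu : A ⊆ E ∪ F := hE.trans Finset.subset_union_left
      have hi : A ⊆ E ∩ F := Finset.subset_inter hE hF
      simp [hu, hi]
    · have hu : A ⊆ E ∪ F := hE.trans Finset.subset_union_left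
      simp only [hu, if_true]
      split <;> norm_num
    · have hu : A ⊆ E ∪ F := hF.trans Finset.subset_union_right
      simp only [hu, if_true]
      split <;> norm_num
    · split <;> split <;> norm_num
  · intro S hS
    have : ¬ A ⊆ S := fun h => by
      have := Finset.card_le_card h; omega
    simp [this]
  · intro f₁ f₂ hg1 hg2 hs1 hs2 heq
    have hsum : ∀ S : Finset α, f₁ S + f₂ S = if A ⊆ S then (1 : ℝ) else 0 := by
      intro S
      have := congrFun heq S
      simpa using this.symm
    have hn1 := supermod_nonneg hg1 hs1
    have hn2 := supermod_nonneg hg2 hs2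
    have hzero : ∀ S : Finset α, ¬ A ⊆ S → f₁ S = 0 ∧ f₂ S = 0 := by
      intro S hS
      have := hsum S
      rw [if_neg hS] at this
      constructor <;> nlinarith [hn1 S, hn2 S]
    have hconst : ∀ S : Finset α, A ⊆ S → f₁ S = f₁ A ∧ f₂ S = f₂ A := by
      intro S hS
      have h1 : f₁ A ≤ f₁ S := supermod_mono hg1 hs1 hS
      have h2 : f₂ A ≤ f₂ S := supermod_mono hg2 hs2 hS
      have e1 := hsum A
      have e2 := hsum S
      rw [if_pos (Finset.Subset.refl A)] at e1
      rw [if_pos hS] at e2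
      constructor <;> linarith
    refine ⟨f₁ A, f₂ A, ?_, ?_⟩ <;> funext S <;>
      simp only [Pi.smul_apply, smul_eq_mul]
    · by_cases hS : A ⊆ S
      · rw [if_pos hS, mul_one, (hconst S hS).1]
      · rw [if_neg hS, mul_zero, (hzero S hS).1]
    · by_cases hS : A ⊆ S
      · rw [if_pos hS, mul_one, (hconst S hS).2]
      · rw [if_neg hS, mul_zero, (hzero S hS).2]
end

section
/- Let A, B partition N and let g : P(A) → ℝ, h : P(B) → ℝ, f(S) := g(A∩S)·h(B∩S), all standardized supermodular. If g and h are skeletal then f is skeletal. -/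
lemma std_sup_nonneg {α : Type*} [DecidableEq α] {f : Finset α → ℝ}
    (hsup : Supermodular f) (hstd : Standardized f) : ∀ S, 0 ≤ f S := by
  intro S
  induction S using Finset.induction_on with
  | empty => rw [hstd ∅ (by simp)]
  | @insert a s ha ih =>
      have h2 := hsup s {a}
      rw [hstd {a} (by simp), Finset.union_comm, ← Finset.insert_eq,
        Finset.inter_singleton_of_notMem ha, hstd ∅ (by simp)] at h2
      linarith

lemma disjSum_union_left {A B : Type*} [DecidableEq A] [DecidableEq B]
    (E₁ E₂ : Finset A) (F : Finset B) :
    (E₁.disjSum F) ∪ (E₂.disjSum F) = (E₁ ∪ E₂).disjSum F := by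
  ext x; cases x <;> simp

lemma disjSum_inter_left {A B : Type*} [DecidableEq A] [DecidableEq B]
    (E₁ E₂ : Finset A) (F : Finset B) :
    (E₁.disjSum F) ∩ (E₂.disjSum F) = (E₁ ∩ E₂).disjSum F := by
  ext x; cases x <;> simp

lemma disjSum_union_right {A B : Type*} [DecidableEq A] [DecidableEq B]
    (E : Finset A) (F₁ F₂ : Finset B) :
    (E.disjSum F₁) ∪ (E.disjSum F₂) = E.disjSum (F₁ ∪ F₂) := by
  ext x; cases x <;> simp

lemma disjSum_inter_right {A B : Type*} [DecidableEq A] [DecidableEq B]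
    (E : Finset A) (F₁ F₂ : Finset B) :
    (E.disjSum F₁) ∩ (E.disjSum F₂) = E.disjSum (F₁ ∩ F₂) := by
  ext x; cases x <;> simp

/-- For a partition `N = A ⊔ B` (modelled as a sum type), the product function
`f(S) = g(S ∩ A) · h(S ∩ B)` on `P(A ⊕ B)`. -/
theorem product_of_skeletals_is_skeletal
    {A B : Type*} [DecidableEq A] [DecidableEq B] [Fintype A] [Fintype B]
    (g : Finset A → ℝ) (h : Finset B → ℝ)
    (hgsup : Supermodular g) (hhsup : Supermodular h)
    (hgstd : Standardized g) (hhstd : Standardized h)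
    (hfsup : Supermodular (fun S : Finset (A ⊕ B) => g S.toLeft * h S.toRight))
    (hfstd : Standardized (fun S : Finset (A ⊕ B) => g S.toLeft * h S.toRight))
    (hgsk : Skeletal g) (hhsk : Skeletal h) :
    Skeletal (fun S : Finset (A ⊕ B) => g S.toLeft * h S.toRight) := by
  intro f₁ f₂ h1sup h2sup h1std h2std heq
  have hsum : ∀ S : Finset (A ⊕ B), f₁ S + f₂ S = g S.toLeft * h S.toRight := by
    intro S
    have := congrFun heq S
    simp only [Pi.add_apply] at this
    linarith
  have h1nn := std_sup_nonneg h1sup h1std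
  have h2nn := std_sup_nonneg h2sup h2std
  have hgnn := std_sup_nonneg hgsup hgstd
  have hhnn := std_sup_nonneg hhsup hhstd
  have hz1 : ∀ S : Finset (A ⊕ B), g S.toLeft * h S.toRight = 0 → f₁ S = 0 := by
    intro S hS
    have := hsum S
    have := h1nn S
    have := h2nn S
    linarith
  have hz2 : ∀ S : Finset (A ⊕ B), g S.toLeft * h S.toRight = 0 → f₂ S = 0 := by
    intro S hS
    have := hsum S
    have := h1nn S
    have := h2nn S
    linarith
  by_cases hg0 : ∀ E : Finset A, g E = 0
  · refine ⟨0, 0, ?_, ?_⟩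
    · funext S
      rw [hz1 S (by rw [hg0 S.toLeft, zero_mul])]
      simp
    · funext S
      rw [hz2 S (by rw [hg0 S.toLeft, zero_mul])]
      simp
  by_cases hh0 : ∀ F : Finset B, h F = 0
  · refine ⟨0, 0, ?_, ?_⟩
    · funext S
      rw [hz1 S (by rw [hh0 S.toRight, mul_zero])]
      simp
    · funext S
      rw [hz2 S (by rw [hh0 S.toRight, mul_zero])]
      simp
  push_neg at hg0 hh0
  obtain ⟨E₀, hE₀⟩ := hg0
  obtain ⟨F₀, hF₀⟩ := hh0
  -- slices over A
  have sliceA : ∀ F : Finset B, h F ≠ 0 →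
      ∃ α : ℝ, ∀ E : Finset A, f₁ (E.disjSum F) = α * g E := by
    intro F hF
    have hFpos : 0 < h F := lt_of_le_of_ne (hhnn F) (Ne.symm hF)
    have hinv : 0 ≤ (h F)⁻¹ := by positivity
    set u : Finset A → ℝ := fun E => (h F)⁻¹ * f₁ (E.disjSum F) with hu
    set v : Finset A → ℝ := fun E => (h F)⁻¹ * f₂ (E.disjSum F) with hv
    have husup : Supermodular u := by
      intro E₁ E₂
      have h2 := h1sup (E₁.disjSum F) (E₂.disjSum F)
      rw [disjSum_union_left, disjSum_inter_left] at h2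
      simp only [hu]
      nlinarith [mul_le_mul_of_nonneg_left h2 hinv]
    have hvsup : Supermodular v := by
      intro E₁ E₂
      have h2 := h2sup (E₁.disjSum F) (E₂.disjSum F)
      rw [disjSum_union_left, disjSum_inter_left] at h2
      simp only [hv]
      nlinarith [mul_le_mul_of_nonneg_left h2 hinv]
    have hustd : Standardized u := by
      intro E hE
      simp only [hu]
      rw [hz1 _ (by rw [Finset.toLeft_disjSum, Finset.toRight_disjSum, hgstd E hE, zero_mul])]
      ring
    have hvstd : Standardized v := by
      intro E hE
      simp only [hv]
      rw [hz2 _ (by rw [Finset.toLeft_disjSum, Finset.toRight_disjSum, hgstd E hE, zero_mul])]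
      ring
    have hsum' : g = u + v := by
      funext E
      simp only [Pi.add_apply, hu, hv]
      have h2 := hsum (E.disjSum F)
      rw [Finset.toLeft_disjSum, Finset.toRight_disjSum] at h2
      field_simp
      linarith
    obtain ⟨c₁, c₂, hc₁, hc₂⟩ := hgsk u v husup hvsup hustd hvstd hsum'
    refine ⟨h F * c₁, fun E => ?_⟩
    have h3 := congrFun hc₁ E
    simp only [hu, Pi.smul_apply, smul_eq_mul] at h3
    calc f₁ (E.disjSum F) = h F * ((h F)⁻¹ * f₁ (E.disjSum F)) := by field_simp
      _ = h F * (c₁ * g E) := by rw [h3]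
      _ = h F * c₁ * g E := by ring
  -- slices over B
  have sliceB : ∀ E : Finset A, g E ≠ 0 →
      ∃ β : ℝ, ∀ F : Finset B, f₁ (E.disjSum F) = β * h F := by
    intro E hE
    have hEpos : 0 < g E := lt_of_le_of_ne (hgnn E) (Ne.symm hE)
    have hinv : 0 ≤ (g E)⁻¹ := by positivity
    set u : Finset B → ℝ := fun F => (g E)⁻¹ * f₁ (E.disjSum F) with hu
    set v : Finset B → ℝ := fun F => (g E)⁻¹ * f₂ (E.disjSum F) with hv
    have husup : Supermodular u := by
      intro F₁ F₂
      have h2 := h1sup (E.disjSum F₁) (E.disjSum F₂)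
      rw [disjSum_union_right, disjSum_inter_right] at h2
      simp only [hu]
      nlinarith [mul_le_mul_of_nonneg_left h2 hinv]
    have hvsup : Supermodular v := by
      intro F₁ F₂
      have h2 := h2sup (E.disjSum F₁) (E.disjSum F₂)
      rw [disjSum_union_right, disjSum_inter_right] at h2
      simp only [hv]
      nlinarith [mul_le_mul_of_nonneg_left h2 hinv]
    have hustd : Standardized u := by
      intro F hF
      simp only [hu]
      rw [hz1 _ (by rw [Finset.toLeft_disjSum, Finset.toRight_disjSum, hhstd F hF, mul_zero])]
      ring
    have hvstd : Standardized v := by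
      intro F hF
      simp only [hv]
      rw [hz2 _ (by rw [Finset.toLeft_disjSum, Finset.toRight_disjSum, hhstd F hF, mul_zero])]
      ring
    have hsum' : h = u + v := by
      funext F
      simp only [Pi.add_apply, hu, hv]
      have h2 := hsum (E.disjSum F)
      rw [Finset.toLeft_disjSum, Finset.toRight_disjSum] at h2
      field_simp
      linarith
    obtain ⟨c₁, c₂, hc₁, hc₂⟩ := hhsk u v husup hvsup hustd hvstd hsum'
    refine ⟨g E * c₁, fun F => ?_⟩
    have h3 := congrFun hc₁ F
    simp only [hu, Pi.smul_apply, smul_eq_mul] at h3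
    calc f₁ (E.disjSum F) = g E * ((g E)⁻¹ * f₁ (E.disjSum F)) := by field_simp
      _ = g E * (c₁ * h F) := by rw [h3]
      _ = g E * c₁ * h F := by ring
  obtain ⟨β, hβ⟩ := sliceB E₀ hE₀
  set c : ℝ := β / g E₀ with hc
  have key : ∀ (E : Finset A) (F : Finset B),
      f₁ (E.disjSum F) = c * (g E * h F) := by
    intro E F
    by_cases hF : h F = 0
    · rw [hz1 _ (by rw [Finset.toLeft_disjSum, Finset.toRight_disjSum, hF, mul_zero]), hF]
      ring
    · obtain ⟨α, hα⟩ := sliceA F hF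
      have h1 : α * g E₀ = β * h F := by rw [← hα E₀, hβ F]
      rw [hα E, hc]
      have : α = β * h F / g E₀ := by
        field_simp
        linarith
      rw [this]
      field_simp
  refine ⟨c, 1 - c, ?_, ?_⟩
  · funext S
    have h1 := key S.toLeft S.toRight
    rw [Finset.toLeft_disjSum_toRight] at h1
    simpa using h1
  · funext S
    have h1 := key S.toLeft S.toRight
    rw [Finset.toLeft_disjSum_toRight] at h1
    have h2 := hsum S
    simp only [Pi.smul_apply, smul_eq_mul]
    linarith
end

section
/- Let X, Y be finite sets and G ⊆ (ℝ⁺)^X, H ⊆ (ℝ⁺)^Y pointed convex cones of non-negative functions. Define M(G,H) = {f : X×Y → ℝ⁺ : f(x,·) ∈ H for all x, f(·,y) ∈ G for all y}. If g is an extreme ray of G and h of H, then (x,y) ↦ g(x)h(y) is an extreme ray of M(G,H). -/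
private lemma aux_inv_mul {a c : ℝ} (hc : c ≠ 0) : a = c⁻¹ * (a * c) := by
  field_simp

/-- `v` generates an extreme ray of the cone `C`. -/
def IsExtremeRayOf {V : Type*} [AddCommMonoid V] [Module ℝ V] (C : Set V) (v : V) : Prop :=
  v ∈ C ∧ v ≠ 0 ∧ ∀ v₁ ∈ C, ∀ v₂ ∈ C, v = v₁ + v₂ →
    ∃ c₁ c₂ : ℝ, 0 ≤ c₁ ∧ 0 ≤ c₂ ∧ v₁ = c₁ • v ∧ v₂ = c₂ • v

theorem product_extreme_ray {X Y : Type*} [Fintype X] [Fintype Y]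
    (G : Set (X → ℝ)) (H : Set (Y → ℝ))
    (hGpos : ∀ g ∈ G, ∀ x, 0 ≤ g x) (hHpos : ∀ h ∈ H, ∀ y, 0 ≤ h y)
    (hGadd : ∀ g₁ ∈ G, ∀ g₂ ∈ G, g₁ + g₂ ∈ G)
    (hGsmul : ∀ g ∈ G, ∀ c : ℝ, 0 ≤ c → c • g ∈ G)
    (hHadd : ∀ h₁ ∈ H, ∀ h₂ ∈ H, h₁ + h₂ ∈ H)
    (hHsmul : ∀ h ∈ H, ∀ c : ℝ, 0 ≤ c → c • h ∈ H)
    (hGpointed : ∀ g ∈ G, -g ∈ G → g = 0)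
    (hHpointed : ∀ h ∈ H, -h ∈ H → h = 0)
    (g : X → ℝ) (h : Y → ℝ)
    (hg : IsExtremeRayOf G g) (hh : IsExtremeRayOf H h) :
    IsExtremeRayOf
      {f : X × Y → ℝ | (∀ p, 0 ≤ f p) ∧ (∀ x, (fun y => f (x, y)) ∈ H) ∧
        (∀ y, (fun x => f (x, y)) ∈ G)}
      (fun p => g p.1 * h p.2) := by
  obtain ⟨hgG, hgne, hgext⟩ := hg
  obtain ⟨hhH, hhne, hhext⟩ := hh
  have hgpos := hGpos g hgG
  have hhpos := hHpos h hhH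
  obtain ⟨x₀, hx₀⟩ : ∃ x, 0 < g x := by
    by_contra hc
    push_neg at hc
    exact hgne (funext fun x => le_antisymm (hc x) (hgpos x))
  obtain ⟨y₀, hy₀⟩ : ∃ y, 0 < h y := by
    by_contra hc
    push_neg at hc
    exact hhne (funext fun y => le_antisymm (hc y) (hhpos y))
  refine ⟨⟨fun p => mul_nonneg (hgpos p.1) (hhpos p.2), fun x => ?_, fun y => ?_⟩, ?_, ?_⟩
  · have heq : (fun y => g x * h y) = (g x) • h := by
      funext y; simp [smul_eq_mul]
    rw [heq]
    exact hHsmul h hhH (g x) (hgpos x)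
  · have heq : (fun x' => g x' * h y) = (h y) • g := by
      funext x'; simp [smul_eq_mul, mul_comm]
    rw [heq]
    exact hGsmul g hgG (h y) (hhpos y)
  · intro h0
    have := congrFun h0 (x₀, y₀)
    simp only [Pi.zero_apply] at this
    nlinarith
  · intro f₁ hf₁ f₂ hf₂ hsum
    obtain ⟨hf₁pos, hf₁H, hf₁G⟩ := hf₁
    obtain ⟨hf₂pos, hf₂H, hf₂G⟩ := hf₂
    have key : ∀ x, ∃ b : ℝ, ∀ y, f₁ (x, y) = b * h y := by
      intro x
      rcases eq_or_lt_of_le (hgpos x) with hz | hpos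
      · refine ⟨0, fun y => ?_⟩
        have h1 := hf₁pos (x, y)
        have h2 := hf₂pos (x, y)
        have h3 := congrFun hsum (x, y)
        simp only [Pi.add_apply] at h3
        rw [← hz, zero_mul] at h3
        rw [zero_mul]
        linarith
      · have hmem1 : (g x)⁻¹ • (fun y => f₁ (x, y)) ∈ H :=
          hHsmul _ (hf₁H x) _ (by positivity)
        have hmem2 : (g x)⁻¹ • (fun y => f₂ (x, y)) ∈ H :=
          hHsmul _ (hf₂H x) _ (by positivity)
        have hsum' : h = (g x)⁻¹ • (fun y => f₁ (x, y)) + (g x)⁻¹ • (fun y => f₂ (x, y)) := by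
          funext y
          have h3 := congrFun hsum (x, y)
          simp only [Pi.add_apply] at h3
          simp only [Pi.add_apply, Pi.smul_apply, smul_eq_mul]
          field_simp
          linear_combination h3
        obtain ⟨c₁, c₂, hc₁, hc₂, he₁, he₂⟩ := hhext _ hmem1 _ hmem2 hsum'
        refine ⟨g x * c₁, fun y => ?_⟩
        have h4 := congrFun he₁ y
        simp only [Pi.smul_apply, smul_eq_mul] at h4
        have h5 := congrArg (fun t => g x * t) h4
        simp only [← mul_assoc, mul_inv_cancel₀ hpos.ne', one_mul] at h5
        linear_combination h5
    choose β hβ using key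
    have hβG : β ∈ G := by
      have heq : β = (h y₀)⁻¹ • (fun x => f₁ (x, y₀)) := by
        funext x
        simp only [Pi.smul_apply, smul_eq_mul, hβ x y₀]
        exact aux_inv_mul hy₀.ne'
      rw [heq]
      exact hGsmul _ (hf₁G y₀) _ (by positivity)
    have hγG : g - β ∈ G := by
      have heq : g - β = (h y₀)⁻¹ • (fun x => f₂ (x, y₀)) := by
        funext x
        have h3 := congrFun hsum (x, y₀)
        simp only [Pi.add_apply] at h3
        have h4 : f₂ (x, y₀) = (g x - β x) * h y₀ := by
          linear_combination -h3 - hβ x y₀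
        simp only [Pi.sub_apply, Pi.smul_apply, smul_eq_mul, h4]
        exact aux_inv_mul hy₀.ne'
      rw [heq]
      exact hGsmul _ (hf₂G y₀) _ (by positivity)
    obtain ⟨c₁, c₂, hc₁, hc₂, he₁, he₂⟩ :=
      hgext β hβG (g - β) hγG (by funext x; simp)
    refine ⟨c₁, c₂, hc₁, hc₂, ?_, ?_⟩
    · funext p
      obtain ⟨x, y⟩ := p
      have h2 := congrFun he₁ x
      simp only [Pi.smul_apply, smul_eq_mul] at h2 ⊢
      linear_combination hβ x y + h y * h2
    · funext p
      obtain ⟨x, y⟩ := p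
      have h2 := congrFun he₂ x
      have h3 := congrFun hsum (x, y)
      simp only [Pi.add_apply] at h3
      simp only [Pi.sub_apply] at h2
      simp only [Pi.smul_apply, smul_eq_mul] at h2 ⊢
      linear_combination -h3 - hβ x y + h y * h2
end
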